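/- Let H be an n_r × n_t complex matrix and Δ an n_t × T complex matrix with T ≥ n_t. Let λ₁ ≥ ... ≥ λ_{n_t} ≥ 0 be the eigenvalues of H†H and 0 ≤ l₁ ≤ ... ≤ l_{n_t} the eigenvalues of ΔΔ†. Then Tr(H Δ Δ† H†) ≥ Σ_{i=1}^{n_t} λᵢ lᵢ. -/

import Mathlib

/-!
Diagonalize `HᴴH = U diag(a) Uᴴ` and `ΔΔᴴ = W diag(b) Wᴴ` with `U`, `W` unitary. Then
`Tr(HΔΔᴴHᴴ) = Tr(HᴴH ΔΔᴴ) = ∑ᵢⱼ aᵢ |Mᵢⱼ|² bⱼ` with `M = UᴴW` unitary, so the matrix `(|Mᵢⱼ|²)` is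
doubly stochastic. By Birkhoff's theorem it is a convex combination of permutation matrices, and
for each permutation `π` the rearrangement inequality gives `∑ᵢ aᵢ b_{π i} ≥ ∑ᵢ λᵢ lᵢ`, since
`λ` and `l` are the two spectra sorted in opposite orders.
-/

open Matrix Finset

namespace Matrix

variable {n : Type*} [Fintype n]

lemma comp_dotProduct_submatrix_mulVec_comp {R : Type*} [CommSemiring R]
    (f g : n → R) (P : Matrix n n R) (σ τ : Equiv.Perm n) :
    f ∘ σ ⬝ᵥ (P.submatrix σ τ *ᵥ g ∘ τ) = f ⬝ᵥ (P *ᵥ g) := by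
  rw [submatrix_mulVec_equiv, Function.comp_assoc, Equiv.self_comp_symm, Function.comp_id,
    comp_equiv_dotProduct_comp_equiv]

lemma trace_mul_mul_conjTranspose {l m : Type*} [Fintype l] [Fintype m] {R : Type*}
    [CommSemiring R] [StarRing R] (A : Matrix l m R) (B : Matrix m n R) :
    (A * B * (A * B)ᴴ).trace = (Aᴴ * A * (B * Bᴴ)).trace := by
  rw [conjTranspose_mul, ← Matrix.mul_assoc, trace_mul_comm]
  simp only [Matrix.mul_assoc]

variable [DecidableEq n]

lemma submatrix_mem_doublyStochastic {R : Type*} [Semiring R] [PartialOrder R] [IsOrderedRing R]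
    {P : Matrix n n R} (hP : P ∈ doublyStochastic R n) (σ τ : Equiv.Perm n) :
    P.submatrix σ τ ∈ doublyStochastic R n := by
  obtain ⟨hnonneg, hrow, hcol⟩ := mem_doublyStochastic_iff_sum.mp hP
  exact mem_doublyStochastic_iff_sum.mpr ⟨fun i j => hnonneg _ _,
    fun i => (Equiv.sum_comp τ (P (σ i))).trans (hrow _),
    fun j => (Equiv.sum_comp σ (P · (τ j))).trans (hcol _)⟩

theorem _root_.Antivary.dotProduct_le_dotProduct_mulVec {R : Type*} [Field R] [LinearOrder R]
    [IsStrictOrderedRing R] {f g : n → R} (hfg : Antivary f g) {P : Matrix n n R}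
    (hP : P ∈ doublyStochastic R n) : f ⬝ᵥ g ≤ f ⬝ᵥ (P *ᵥ g) := by
  obtain ⟨w, hw0, hw1, rfl⟩ := exists_eq_sum_perm_of_mem_doublyStochastic hP
  calc f ⬝ᵥ g = ∑ σ, w σ * (f ⬝ᵥ g) := by rw [← Finset.sum_mul, hw1, one_mul]
    _ ≤ ∑ σ, w σ * (f ⬝ᵥ (σ.permMatrix R *ᵥ g)) := by
      gcongr with σ
      · exact hw0 σ
      · rw [permMatrix_mulVec]
        exact hfg.sum_mul_le_sum_mul_comp_perm
    _ = f ⬝ᵥ ((∑ σ, w σ • σ.permMatrix R) *ᵥ g) := by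
      simp [Matrix.sum_mulVec, dotProduct_sum, smul_mulVec, dotProduct_smul]

variable {𝕜 : Type*} [RCLike 𝕜]

lemma map_norm_sq_mem_doublyStochastic {U : Matrix n n 𝕜} (hU : U ∈ unitaryGroup n 𝕜) :
    U.map (‖·‖ ^ 2) ∈ doublyStochastic ℝ n := by
  have hrow (i : n) : ∑ j, ‖U i j‖ ^ 2 = 1 := by
    have := congrFun (congrFun (mem_unitaryGroup_iff.mp hU) i) i
    simp only [mul_apply, star_apply, RCLike.star_def, RCLike.mul_conj, one_apply_eq] at this
    exact_mod_cast this
  have hcol (j : n) : ∑ i, ‖U i j‖ ^ 2 = 1 := by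
    have := congrFun (congrFun (mem_unitaryGroup_iff'.mp hU) j) j
    simp only [mul_apply, star_apply, RCLike.star_def, RCLike.conj_mul, one_apply_eq] at this
    exact_mod_cast this
  exact mem_doublyStochastic_iff_sum.mpr ⟨fun _ _ => by simp only [map_apply]; positivity,
    hrow, hcol⟩

lemma re_trace_diagonal_mul_mul_diagonal_mul_conjTranspose (a b : n → ℝ) (M : Matrix n n 𝕜) :
    RCLike.re (diagonal (fun i => (a i : 𝕜)) * M * diagonal (fun j => (b j : 𝕜)) * Mᴴ).trace
      = a ⬝ᵥ (M.map (‖·‖ ^ 2) *ᵥ b) := by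
  have hdiag (i : n) :
      (diagonal (fun i => (a i : 𝕜)) * M * diagonal (fun j => (b j : 𝕜)) * Mᴴ) i i
        = ∑ j, ((a i * (‖M i j‖ ^ 2 * b j) : ℝ) : 𝕜) := by
    rw [mul_apply]
    refine sum_congr rfl fun j _ => ?_
    rw [mul_diagonal, diagonal_mul, conjTranspose_apply, RCLike.star_def]
    push_cast
    rw [← RCLike.mul_conj]
    ring
  simp only [trace, diag, hdiag, dotProduct, mulVec, map_apply, mul_sum, ← RCLike.ofReal_sum,
    RCLike.ofReal_re]

open Unitary in
lemma IsHermitian.exists_mem_doublyStochastic_re_trace_mul_eq {A B : Matrix n n 𝕜}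
    (hA : A.IsHermitian) (hB : B.IsHermitian) :
    ∃ P ∈ doublyStochastic ℝ n,
      RCLike.re (A * B).trace = hA.eigenvalues ⬝ᵥ (P *ᵥ hB.eigenvalues) := by
  refine ⟨_, map_norm_sq_mem_doublyStochastic
    (mul_mem (star_mem hA.eigenvectorUnitary.2) hB.eigenvectorUnitary.2), ?_⟩
  rw [← re_trace_diagonal_mul_mul_diagonal_mul_conjTranspose]
  conv_lhs => rw [hA.spectral_theorem, hB.spectral_theorem]
  simp only [conjStarAlgAut_apply, ← star_eq_conjTranspose, star_mul, star_star,
    Function.comp_def, Matrix.mul_assoc]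
  rw [trace_mul_comm (hA.eigenvectorUnitary : Matrix n n 𝕜)]
  simp only [Matrix.mul_assoc]

end Matrix

theorem stmt_10_general (nr nt T : ℕ)
    (H : Matrix (Fin nr) (Fin nt) ℂ) (Δ : Matrix (Fin nt) (Fin T) ℂ)
    (lam l : Fin nt → ℝ) (hlam : Antitone lam) (hl : Monotone l)
    (hperm₁ : ∃ σ : Equiv.Perm (Fin nt),
      lam = (isHermitian_conjTranspose_mul_self H).eigenvalues ∘ σ)
    (hperm₂ : ∃ σ : Equiv.Perm (Fin nt),
      l = (isHermitian_mul_conjTranspose_self Δ).eigenvalues ∘ σ) :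
    ∑ i, lam i * l i ≤ (Matrix.trace (H * Δ * (H * Δ)ᴴ)).re := by
  obtain ⟨σ, rfl⟩ := hperm₁
  obtain ⟨τ, rfl⟩ := hperm₂
  obtain ⟨P, hP, htrace⟩ := (isHermitian_conjTranspose_mul_self H)
    |>.exists_mem_doublyStochastic_re_trace_mul_eq (isHermitian_mul_conjTranspose_self Δ)
  rw [trace_mul_mul_conjTranspose, ← RCLike.re_to_complex, htrace,
    ← comp_dotProduct_submatrix_mulVec_comp _ _ _ σ τ]
  exact (hlam.antivary hl).dotProduct_le_dotProduct_mulVec (submatrix_mem_doublyStochastic hP σ τ)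

theorem stmt_10 (nr nt T : ℕ) (hT : nt ≤ T)
    (H : Matrix (Fin nr) (Fin nt) ℂ) (Δ : Matrix (Fin nt) (Fin T) ℂ)
    (lam l : Fin nt → ℝ) (hlam : Antitone lam) (hl : Monotone l)
    (hperm₁ : ∃ σ : Equiv.Perm (Fin nt),
      lam = (isHermitian_conjTranspose_mul_self H).eigenvalues ∘ σ)
    (hperm₂ : ∃ σ : Equiv.Perm (Fin nt),
      l = (isHermitian_mul_conjTranspose_self Δ).eigenvalues ∘ σ) :
    ∑ i, lam i * l i ≤ (Matrix.trace (H * Δ * (H * Δ)ᴴ)).re :=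
  stmt_10_general nr nt T H Δ lam l hlam hl hperm₁ hperm₂
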